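/- Let N ≥ 1 and n ≥ 1, let μ be probability weights on {1,…,N}, and for each integer k ≥ 1 let p_k : {1,…,N} → ℝ be nonnegative and nondecreasing (0 ≤ p_k(j) ≤ p_k(j') whenever j ≤ j'). Let p(j) = Σ_{k≥1} p_k(j) t^k ∈ ℝ[[t]]. Then every coefficient of the formal power series E_n(p,…,p) is nonnegative. -/

import Mathlib

open Finset

/-- The formal power series `p(j) = ∑_{k ≥ 1} p_k(j) t^k` (zero constant term). -/
noncomputable def pSer {Ω : Type*} (p : ℕ → Ω → ℝ) (ω : Ω) : PowerSeries ℝ :=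
  PowerSeries.mk fun k => if k = 0 then 0 else p k ω

/-- The power series `E_n(p,…,p) = ∑_{σ ⊢ [n]} (-1)^{ℓ(σ)+1} (∏_i (|σ_i|-1)!)
∏_i (∑_j μ(j) p(j)^{|σ_i|})`. -/
noncomputable def EnSer {Ω : Type*} [Fintype Ω] (μ : Ω → ℝ) (p : ℕ → Ω → ℝ) (n : ℕ) :
    PowerSeries ℝ :=
  ∑ σ : Finpartition (Finset.univ : Finset (Fin n)),
    PowerSeries.C ((-1 : ℝ) ^ (σ.parts.card + 1) *
        ∏ b ∈ σ.parts, ((b.card - 1).factorial : ℝ)) *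
      ∏ b ∈ σ.parts, (∑ ω, PowerSeries.C (μ ω) * (pSer p ω) ^ b.card)

/-!
Write `p(ω) = ∑_j [j ≤ ω] g_j`, where `g_j = p(j) - p(j - 1)` has nonnegative coefficients by
monotonicity. Expanding multilinearly, `E_n(p,…,p) = ∑_ℓ κ(ℓ) ∏_i g_{ℓ(i)}`, where `κ(ℓ)` is the
joint cumulant under `μ` of the nested indicators `[ℓ(i) ≤ ω]`, so it suffices that `κ(ℓ) ≥ 0`.

Indeed `-κ(ℓ) = S(univ)`, where `S(s) = ∑_σ (-1)^{|σ|} ∏_{b ∈ σ} v(b)` over the partitions `σ`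
of `s` and `v(b) = (|b| - 1)! μ{ω ≥ max ℓ(b)}`. A partition of `t ∪ {a}` is a partition of `t` in
which `a` either forms a new block or joins a block `b`; when `ℓ(a)` is minimal,
`v(b ∪ {a}) = |b| v(b)`, so `S(t ∪ {a}) = (|t| - v({a})) S(t)`. As `0 ≤ v({a}) ≤ 1`, this factor
is `≤ 0` when `t = ∅` and `≥ 0` otherwise, so `S(s) ≤ 0` for every nonempty `s`.
-/

namespace Finpartition

variable {α : Type*} [DecidableEq α] {s t : Finset α} {a : α}

lemma subset_of_mem_insert_empty (P : Finpartition s) {b : Finset α} (hb : b ∈ insert ∅ P.parts) :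
    b ⊆ s := by
  rcases mem_insert.1 hb with rfl | hb
  · exact empty_subset s
  · exact P.le hb

lemma parts_avoid_of_mem_insert_empty (P : Finpartition s) {b : Finset α}
    (hb : b ∈ insert ∅ P.parts) : (P.avoid b).parts = P.parts.erase b := by
  have hdisj : ∀ d ∈ P.parts, d ≠ b → Disjoint d b := by
    rcases mem_insert.1 hb with rfl | hb
    · exact fun d _ _ => disjoint_empty_right d
    · exact fun d hd hne => P.disjoint hd hb hne
  ext c
  rw [mem_avoid, mem_erase]
  constructor
  · rintro ⟨d, hd, hdb, rfl⟩
    have hne : d ≠ b := by rintro rfl; exact hdb le_rfl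
    rw [sdiff_eq_self_of_disjoint (hdisj d hd hne)]
    exact ⟨hne, hd⟩
  · rintro ⟨hcb, hc⟩
    exact ⟨c, hc, fun hle => P.ne_bot hc ((hdisj c hc hcb).eq_bot_of_le hle),
      sdiff_eq_self_of_disjoint (hdisj c hc hcb)⟩

/-- Adds `a` to the part `b` of `P`; `b = ∅` encodes adding `{a}` as a new part. -/
def insertInto (P : Finpartition t) (ha : a ∉ t) {b : Finset α} (hb : b ∈ insert ∅ P.parts) :
    Finpartition (insert a t) :=
  (P.avoid b).extend (insert_ne_empty a b)
    (disjoint_insert_right.2 ⟨fun h => ha (mem_sdiff.1 h).1, sdiff_disjoint⟩)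
    (by rw [sup_eq_union, union_insert, sdiff_union_of_subset (P.subset_of_mem_insert_empty hb)])

lemma parts_insertInto (P : Finpartition t) (ha : a ∉ t) {b : Finset α}
    (hb : b ∈ insert ∅ P.parts) :
    (P.insertInto ha hb).parts = insert (insert a b) (P.parts.erase b) := by
  rw [insertInto, extend_parts, P.parts_avoid_of_mem_insert_empty hb]

lemma part_insertInto (P : Finpartition t) (ha : a ∉ t) {b : Finset α}
    (hb : b ∈ insert ∅ P.parts) : (P.insertInto ha hb).part a = insert a b :=
  (P.insertInto ha hb).part_eq_of_mem (by rw [parts_insertInto]; exact mem_insert_self _ _)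
    (mem_insert_self a b)

lemma erase_empty_insert_erase (P : Finpartition s) {b : Finset α} (hb : b ∈ insert ∅ P.parts) :
    (insert b (P.parts.erase b)).erase ∅ = P.parts := by
  rcases mem_insert.1 hb with rfl | hb
  · rw [erase_insert_eq_erase, erase_eq_of_notMem (notMem_erase _ _),
      erase_eq_of_notMem P.empty_notMem_parts]
  · rw [insert_erase hb, erase_eq_of_notMem P.empty_notMem_parts]

lemma eq_of_insertInto_eq (ha : a ∉ t) {P Q : Finpartition t} {b c : Finset α}
    (hb : b ∈ insert ∅ P.parts) (hc : c ∈ insert ∅ Q.parts)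
    (h : P.insertInto ha hb = Q.insertInto ha hc) : P = Q ∧ b = c := by
  have hbc : b = c := by
    have := congrArg (·.part a) h
    simp only [part_insertInto] at this
    rw [← erase_insert (fun h => ha (P.subset_of_mem_insert_empty hb h)), this,
      erase_insert (fun h => ha (Q.subset_of_mem_insert_empty hc h))]
  subst hbc
  refine ⟨Finpartition.ext ?_, rfl⟩
  have hnot : ∀ R : Finpartition t, insert a b ∉ R.parts.erase b :=
    fun R h => ha (R.le (mem_of_mem_erase h) (mem_insert_self a b))
  have := congrArg parts h
  rw [parts_insertInto, parts_insertInto] at this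
  rw [← P.erase_empty_insert_erase hb, ← Q.erase_empty_insert_erase hc,
    ← erase_insert (hnot P), this, erase_insert (hnot Q)]

lemma exists_insertInto_eq (ha : a ∉ t) (σ : Finpartition (insert a t)) :
    ∃ (P : Finpartition t) (b : Finset α) (hb : b ∈ insert ∅ P.parts), P.insertInto ha hb = σ := by
  have hσa : σ.part a ∈ σ.parts := σ.part_mem.2 (mem_insert_self a t)
  have haσ : a ∈ σ.part a := σ.mem_part (mem_insert_self a t)
  let P := (σ.avoid {a}).copy (by
    rw [insert_sdiff_of_mem _ (mem_singleton_self a), sdiff_singleton_eq_erase, erase_eq_self.2 ha])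
  have hb : σ.part a \ {a} ∈ insert ∅ P.parts := by
    rw [mem_insert, copy_parts, mem_avoid]
    by_cases h : σ.part a \ {a} = ∅
    · exact Or.inl h
    · exact Or.inr ⟨σ.part a, hσa, fun hle => h (sdiff_eq_empty_iff_subset.2 hle), rfl⟩
  refine ⟨P, _, hb, Finpartition.ext ?_⟩
  ext c
  rw [parts_insertInto, insert_sdiff_self_of_mem haσ, mem_insert, mem_erase, copy_parts, mem_avoid]
  constructor
  · rintro (rfl | ⟨hne, d, hd, -, rfl⟩)
    · exact hσa
    · by_cases had : a ∈ d
      · rw [σ.part_eq_of_mem hd had] at hne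
        exact absurd rfl hne
      · rwa [sdiff_singleton_eq_erase, erase_eq_self.2 had]
  · intro hc
    by_cases hac : a ∈ c
    · exact Or.inl (σ.part_eq_of_mem hc hac).symm
    · have hcc : c \ {a} = c := by rw [sdiff_singleton_eq_erase, erase_eq_self.2 hac]
      refine Or.inr ⟨fun h => ?_, c, hc, fun hle => ?_, hcc⟩
      · obtain ⟨x, hx⟩ := σ.nonempty_of_mem_parts hc
        have := σ.eq_of_mem_parts hc hσa hx (sdiff_subset (h ▸ hx))
        exact hac (this ▸ haσ)
      · exact σ.ne_bot hc (by rw [← hcc]; exact sdiff_eq_empty_iff_subset.2 hle)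

theorem sum_finpartition_insert {M : Type*} [AddCommMonoid M] (ha : a ∉ t)
    (f : Finset (Finset α) → M) :
    ∑ σ : Finpartition (insert a t), f σ.parts =
      ∑ P : Finpartition t, ∑ b ∈ insert ∅ P.parts, f (insert (insert a b) (P.parts.erase b)) := by
  rw [sum_sigma']
  symm
  refine sum_bij (fun x hx => x.1.insertInto ha (mem_sigma.1 hx).2) (fun _ _ => mem_univ _)
    ?_ ?_ ?_
  · rintro ⟨P, b⟩ hb ⟨Q, c⟩ hc h
    obtain ⟨rfl, rfl⟩ := eq_of_insertInto_eq ha _ _ h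
    rfl
  · intro σ _
    obtain ⟨P, b, hb, rfl⟩ := exists_insertInto_eq ha σ
    exact ⟨⟨P, b⟩, mem_sigma.2 ⟨mem_univ _, hb⟩, rfl⟩
  · intro x hx
    rw [parts_insertInto]

end Finpartition

section SignedPartitionSum

variable {α R : Type*} [DecidableEq α] [CommRing R]

def signedPartitionSum (v : Finset α → R) (s : Finset α) : R :=
  ∑ σ : Finpartition s, (-1) ^ #σ.parts * ∏ b ∈ σ.parts, v b

lemma signedPartitionSum_empty (v : Finset α → R) : signedPartitionSum v ∅ = 1 := by
  rw [signedPartitionSum, ← bot_eq_empty, Fintype.sum_unique, Finpartition.default_eq_empty]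
  simp

lemma signedPartitionSum_insert {v : Finset α → R} {a : α} {t : Finset α} (ha : a ∉ t)
    (hv : ∀ b ⊆ t, b.Nonempty → v (insert a b) = #b * v b) :
    signedPartitionSum v (insert a t) = (#t - v {a}) * signedPartitionSum v t := by
  rw [signedPartitionSum, Finpartition.sum_finpartition_insert ha fun P => (-1) ^ #P * ∏ b ∈ P, v b,
    signedPartitionSum, mul_sum]
  refine sum_congr rfl fun P _ => ?_
  have hnew : {a} ∉ P.parts := fun h => ha (P.le h (mem_singleton_self a))
  have hold : ∀ b ∈ P.parts, insert a b ∉ P.parts.erase b :=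
    fun b _ h => ha (P.le (mem_of_mem_erase h) (mem_insert_self a b))
  have hjoin : ∀ b ∈ P.parts, (-1) ^ #(insert (insert a b) (P.parts.erase b)) *
      ∏ c ∈ insert (insert a b) (P.parts.erase b), v c =
        #b * ((-1) ^ #P.parts * ∏ c ∈ P.parts, v c) := by
    intro b hb
    rw [card_insert_of_notMem (hold b hb), prod_insert (hold b hb), card_erase_add_one hb,
      hv b (P.le hb) (P.nonempty_of_mem_parts hb), mul_assoc, mul_prod_erase P.parts v hb]
    ring
  rw [sum_insert P.empty_notMem_parts, erase_eq_of_notMem P.empty_notMem_parts, insert_empty,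
    card_insert_of_notMem hnew, prod_insert hnew, sum_congr rfl hjoin, ← sum_mul,
    ← Nat.cast_sum, P.sum_card_parts]
  ring

lemma signedPartitionSum_nonpos [LinearOrder R] [IsStrictOrderedRing R]
    {β : Type*} [LinearOrder β] (v : Finset α → R) (ℓ : α → β)
    (hv0 : ∀ a, 0 ≤ v {a}) (hv1 : ∀ a, v {a} ≤ 1)
    (hv : ∀ a b, a ∉ b → b.Nonempty → (∀ i ∈ b, ℓ a ≤ ℓ i) → v (insert a b) = #b * v b)
    (s : Finset α) (hs : s.Nonempty) : signedPartitionSum v s ≤ 0 := by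
  induction s using Finset.induction_on_min_value ℓ with
  | empty => exact absurd hs not_nonempty_empty
  | insert a t ha hmin ih =>
    rw [signedPartitionSum_insert ha
      fun b hb hne => hv a b (fun h => ha (hb h)) hne fun i hi => hmin i (hb hi)]
    rcases t.eq_empty_or_nonempty with rfl | ht
    · simp [signedPartitionSum_empty, hv0 a]
    · refine mul_nonpos_of_nonneg_of_nonpos ?_ (ih ht)
      have : (1 : R) ≤ #t := by exact_mod_cast ht.card_pos
      linarith [hv1 a]

end SignedPartitionSum

section Increment

variable {M : Type*} [AddCommGroup M] {N : ℕ}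

/-- `f j - f (j - 1)`, read with `f (-1) = 0`. -/
def increment (f : Fin N → M) (j : Fin N) : M :=
  Matrix.vecCons 0 f j.succ - Matrix.vecCons 0 f j.castSucc

lemma sum_Iic_increment (f : Fin N → M) (ω : Fin N) :
    ∑ j ≤ ω, increment f j = f ω := by
  simp only [increment]
  rw [Fin.sum_Iic_sub, Matrix.cons_val_succ, Matrix.cons_val_zero, sub_zero]

lemma increment_nonneg [PartialOrder M] [IsOrderedAddMonoid M] {f : Fin N → M}
    (hf0 : ∀ j, 0 ≤ f j) (hf : Monotone f) (j : Fin N) : 0 ≤ increment f j := by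
  rcases N with _ | N
  · exact j.elim0
  · exact sub_nonneg.2 (hf.vecCons (hf0 0) Fin.castSucc_lt_succ.le)

end Increment

noncomputable def incrementSeries {N : ℕ} (p : ℕ → Fin N → ℝ) (j : Fin N) : PowerSeries ℝ :=
  PowerSeries.mk fun k => if k = 0 then 0 else increment (p k) j

lemma pSer_eq_sum_incrementSeries {N : ℕ} (p : ℕ → Fin N → ℝ) (ω : Fin N) :
    pSer p ω = ∑ j, PowerSeries.C (if j ≤ ω then 1 else 0) * incrementSeries p j := by
  ext k
  simp only [pSer, incrementSeries, map_sum, PowerSeries.coeff_C_mul, PowerSeries.coeff_mk,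
    boole_mul]
  split_ifs with hk
  · simp
  · rw [← sum_filter, filter_ge_eq_Iic, sum_Iic_increment]

lemma coeff_incrementSeries_nonneg {N : ℕ} {p : ℕ → Fin N → ℝ} (hp0 : ∀ k, 1 ≤ k → ∀ j, 0 ≤ p k j)
    (hpmono : ∀ k, 1 ≤ k → Monotone (p k)) (j : Fin N) (k : ℕ) :
    0 ≤ PowerSeries.coeff k (incrementSeries p j) := by
  rw [incrementSeries, PowerSeries.coeff_mk]
  split_ifs with hk
  · exact le_rfl
  · have hk1 : 1 ≤ k := Nat.one_le_iff_ne_zero.2 hk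
    exact increment_nonneg (hp0 k hk1) (hpmono k hk1) j

lemma PowerSeries.coeff_prod_nonneg {ι R : Type*} [CommSemiring R] [PartialOrder R]
    [IsOrderedRing R] {s : Finset ι} {f : ι → PowerSeries R}
    (hf : ∀ i ∈ s, ∀ k, 0 ≤ PowerSeries.coeff k (f i)) (d : ℕ) :
    0 ≤ PowerSeries.coeff d (∏ i ∈ s, f i) := by
  classical
  rw [PowerSeries.coeff_prod]
  exact sum_nonneg fun l _ => prod_nonneg fun i hi => hf i hi _

namespace Finpartition

variable {ι Ω A : Type*} [Fintype ι] [DecidableEq ι] [Fintype Ω] [CommSemiring A]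
  (σ : Finpartition (univ : Finset ι))

lemma prod_parts_prod_eq_prod_part (F : σ.parts → ι → A) :
    ∏ b : σ.parts, ∏ i ∈ b.1, F b i = ∏ i, F ⟨σ.part i, σ.part_mem.2 (mem_univ i)⟩ i :=
  calc ∏ b : σ.parts, ∏ i ∈ b.1, F b i
      = ∏ b ∈ σ.parts, ∏ i ∈ b, F ⟨σ.part i, σ.part_mem.2 (mem_univ i)⟩ i := by
        rw [← prod_coe_sort σ.parts]
        refine prod_congr rfl fun b _ => prod_congr rfl fun i hi => ?_
        exact congrArg (F · i) (Subtype.ext (σ.part_eq_of_mem b.2 hi).symm)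
    _ = ∏ i ∈ σ.parts.biUnion id, F ⟨σ.part i, σ.part_mem.2 (mem_univ i)⟩ i :=
        (prod_biUnion σ.disjoint).symm
    _ = ∏ i, F ⟨σ.part i, σ.part_mem.2 (mem_univ i)⟩ i := by rw [σ.biUnion_parts]

lemma prod_parts_sum_mul_prod (μ : Ω → A) (F : Ω → ι → A) :
    ∏ b ∈ σ.parts, ∑ ω, μ ω * ∏ i ∈ b, F ω i =
      ∑ w : σ.parts → Ω, (∏ b, μ (w b)) *
        ∏ i, F (w ⟨σ.part i, σ.part_mem.2 (mem_univ i)⟩) i := by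
  rw [← prod_coe_sort, Fintype.prod_sum]
  refine sum_congr rfl fun w _ => ?_
  rw [prod_mul_distrib, σ.prod_parts_prod_eq_prod_part fun b i => F (w b) i]

lemma prod_parts_sum_mul_pow {J : Type*} [Fintype J] (μ : Ω → A) (c : J → Ω → A) (x : J → A) :
    ∏ b ∈ σ.parts, ∑ ω, μ ω * (∑ j, c j ω * x j) ^ #b =
      ∑ ℓ : ι → J, (∏ b ∈ σ.parts, ∑ ω, μ ω * ∏ i ∈ b, c (ℓ i) ω) * ∏ i, x (ℓ i) := by
  simp_rw [← prod_const (∑ j, c _ _ * x j), σ.prod_parts_sum_mul_prod μ, Fintype.prod_sum,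
    prod_mul_distrib, mul_sum, ← mul_assoc]
  rw [sum_comm]
  refine sum_congr rfl fun ℓ _ => ?_
  rw [← sum_mul]

end Finpartition

section IndicatorCumulant

open Nat

variable {ι Ω : Type*} [Fintype Ω] [LinearOrder Ω]

def indicatorMoment (μ : Ω → ℝ) (ℓ : ι → Ω) (b : Finset ι) : ℝ :=
  ∑ ω, μ ω * ∏ i ∈ b, if ℓ i ≤ ω then 1 else 0

def indicatorCumulant [Fintype ι] [DecidableEq ι] (μ : Ω → ℝ) (ℓ : ι → Ω) : ℝ :=
  ∑ σ : Finpartition (univ : Finset ι),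
    ((-1 : ℝ) ^ (#σ.parts + 1) * ∏ b ∈ σ.parts, ((#b - 1)! : ℝ)) *
      ∏ b ∈ σ.parts, indicatorMoment μ ℓ b

variable {μ : Ω → ℝ} {ℓ : ι → Ω}

lemma indicatorMoment_nonneg (hμ0 : ∀ ω, 0 ≤ μ ω) (b : Finset ι) :
    0 ≤ indicatorMoment μ ℓ b :=
  sum_nonneg fun ω _ => mul_nonneg (hμ0 ω) (prod_nonneg fun i _ => by split_ifs <;> norm_num)

lemma indicatorMoment_le_one (hμ0 : ∀ ω, 0 ≤ μ ω) (hμ1 : ∑ ω, μ ω = 1) (b : Finset ι) :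
    indicatorMoment μ ℓ b ≤ 1 :=
  hμ1 ▸ sum_le_sum fun ω _ => mul_le_of_le_one_right (hμ0 ω)
    (prod_le_one (fun i _ => by split_ifs <;> norm_num) fun i _ => by split_ifs <;> norm_num)

lemma indicatorMoment_insert_of_le [DecidableEq ι] {a : ι} {b : Finset ι} (hb : b.Nonempty)
    (hmin : ∀ i ∈ b, ℓ a ≤ ℓ i) : indicatorMoment μ ℓ (insert a b) = indicatorMoment μ ℓ b := by
  have hiff : ∀ ω, (∀ i ∈ insert a b, ℓ i ≤ ω) ↔ ∀ i ∈ b, ℓ i ≤ ω := fun ω => by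
    obtain ⟨i, hi⟩ := hb
    rw [forall_mem_insert]
    exact ⟨And.right, fun h => ⟨(hmin i hi).trans (h i hi), h⟩⟩
  refine sum_congr rfl fun ω _ => ?_
  rw [prod_boole, prod_boole, if_congr (hiff ω) rfl rfl]

lemma indicatorCumulant_nonneg [Fintype ι] [DecidableEq ι] [Nonempty ι] (hμ0 : ∀ ω, 0 ≤ μ ω)
    (hμ1 : ∑ ω, μ ω = 1) :
    0 ≤ indicatorCumulant μ ℓ := by
  set v := fun b : Finset ι => ((#b - 1)! : ℝ) * indicatorMoment μ ℓ b
  have hK : indicatorCumulant μ ℓ = -signedPartitionSum v univ := by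
    rw [indicatorCumulant, signedPartitionSum, ← sum_neg_distrib]
    refine sum_congr rfl fun σ _ => ?_
    rw [pow_succ, prod_mul_distrib]
    ring
  rw [hK, neg_nonneg]
  refine signedPartitionSum_nonpos v ℓ (fun a => ?_) (fun a => ?_) (fun a b hab hb hmin => ?_)
    univ univ_nonempty
  · simpa [v] using indicatorMoment_nonneg hμ0 {a}
  · simpa [v] using indicatorMoment_le_one hμ0 hμ1 {a}
  · simp only [v, card_insert_of_notMem hab, Nat.add_sub_cancel,
      indicatorMoment_insert_of_le hb hmin]
    rw [← Nat.mul_factorial_pred hb.card_pos.ne', Nat.cast_mul]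
    ring

end IndicatorCumulant

lemma EnSer_eq_sum_indicatorCumulant {N n : ℕ} (μ : Fin N → ℝ) (p : ℕ → Fin N → ℝ) :
    EnSer μ p n = ∑ ℓ : Fin n → Fin N,
      PowerSeries.C (indicatorCumulant μ ℓ) * ∏ i, incrementSeries p (ℓ i) := by
  simp only [EnSer, indicatorCumulant, indicatorMoment, pSer_eq_sum_incrementSeries,
    Finpartition.prod_parts_sum_mul_pow, mul_sum, map_sum, sum_mul, map_mul, map_prod, mul_assoc]
  exact sum_comm

theorem stmt10_general (N n : ℕ) (hn : 1 ≤ n)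
    (μ : Fin N → ℝ) (hμ0 : ∀ j, 0 ≤ μ j) (hμ1 : ∑ j, μ j = 1)
    (p : ℕ → Fin N → ℝ)
    (hp0 : ∀ k, 1 ≤ k → ∀ j, 0 ≤ p k j)
    (hpmono : ∀ k, 1 ≤ k → Monotone (p k)) :
    ∀ m : ℕ, 0 ≤ PowerSeries.coeff m (EnSer μ p n) := by
  have : Nonempty (Fin n) := ⟨⟨0, hn⟩⟩
  intro m
  rw [EnSer_eq_sum_indicatorCumulant, map_sum]
  refine sum_nonneg fun ℓ _ => ?_
  rw [PowerSeries.coeff_C_mul]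
  exact mul_nonneg (indicatorCumulant_nonneg hμ0 hμ1)
    (PowerSeries.coeff_prod_nonneg (fun i _ => coeff_incrementSeries_nonneg hp0 hpmono (ℓ i)) m)

/-- Let `N ≥ 1`, `n ≥ 1`, let `μ` be probability weights on `{1,…,N}`,
and for each `k ≥ 1` let `p_k : {1,…,N} → ℝ` be nonnegative and nondecreasing.  Then
every coefficient of the formal power series `E_n(p,…,p)` is nonnegative. -/
theorem stmt10 (N n : ℕ) (hN : 1 ≤ N) (hn : 1 ≤ n)
    (μ : Fin N → ℝ) (hμ0 : ∀ j, 0 ≤ μ j) (hμ1 : ∑ j, μ j = 1)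
    (p : ℕ → Fin N → ℝ)
    (hp0 : ∀ k, 1 ≤ k → ∀ j, 0 ≤ p k j)
    (hpmono : ∀ k, 1 ≤ k → Monotone (p k)) :
    ∀ m : ℕ, 0 ≤ PowerSeries.coeff m (EnSer μ p n) :=
  stmt10_general N n hn μ hμ0 hμ1 p hp0 hpmono
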